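/- Let (X,S) be nondegenerate and involutive. Then (X,S) is braided (hence a symmetric set) if and only if f_y ∘ f_x = f_{f_y(x)} ∘ f_{g_x(y)} for all x, y ∈ X. -/

import Mathlib

/-- The map `f_y : X → X`, where `S (x,y) = (g_x y, f_y x)`. -/
def fm {X : Type*} (S : X × X → X × X) (y : X) : X → X := fun x => (S (x, y)).2

/-- The map `g_x : X → X`, where `S (x,y) = (g_x y, f_y x)`. -/
def gm {X : Type*} (S : X × X → X × X) (x : X) : X → X := fun y => (S (x, y)).1

/-- `(X,S)` is nondegenerate: every `f_y` and every `g_x` is a bijection. -/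
def Nondeg {X : Type*} (S : X × X → X × X) : Prop :=
  (∀ y : X, Function.Bijective (fm S y)) ∧ (∀ x : X, Function.Bijective (gm S x))

/-- `S^{12} : X³ → X³`, applying `S` to the first two coordinates. -/
def S12 {X : Type*} (S : X × X → X × X) : X × X × X → X × X × X :=
  fun p => ((S (p.1, p.2.1)).1, (S (p.1, p.2.1)).2, p.2.2)

/-- `S^{23} : X³ → X³`, applying `S` to the last two coordinates. -/
def S23 {X : Type*} (S : X × X → X × X) : X × X × X → X × X × X :=
  fun p => (p.1, (S (p.2.1, p.2.2)).1, (S (p.2.1, p.2.2)).2)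

/-- `(X,S)` is braided: `S^{12} S^{23} S^{12} = S^{23} S^{12} S^{23}`. -/
def Braided {X : Type*} (S : X × X → X × X) : Prop :=
  S12 S ∘ S23 S ∘ S12 S = S23 S ∘ S12 S ∘ S23 S

/-- `(X,S)` is involutive: `S ∘ S = id`. -/
def Invol {X : Type*} (S : X × X → X × X) : Prop := S ∘ S = id

/-- Proposition 2.2 (c): for nondegenerate involutive `(X,S)`, the braid relation holds
(so `(X,S)` is a symmetric set) iff `f_y ∘ f_x = f_{f_y(x)} ∘ f_{g_x(y)}` for all `x, y`. -/
theorem braided_iff_f_action {X : Type*} (S : X × X → X × X)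
    (hnd : Nondeg S) (hinv : Invol S) :
    Braided S ↔ ∀ x y : X, fm S y ∘ fm S x = fm S (fm S y x) ∘ fm S (gm S x y) := by
  obtain ⟨hf, hg⟩ := hnd
  have hI : ∀ a b : X, S (gm S a b, fm S b a) = (a, b) := by
    intro a b
    have h := congrFun hinv (a, b)
    simpa [Function.comp, gm, fm] using h
  have hg1 : ∀ a b : X, gm S (gm S a b) (fm S b a) = a := by
    intro a b
    have := congrArg Prod.fst (hI a b)
    simpa [gm] using this
  have hf1 : ∀ a b : X, fm S (fm S b a) (gm S a b) = b := by
    intro a b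
    have := congrArg Prod.snd (hI a b)
    simpa [fm] using this
  constructor
  · intro h x y
    funext a
    have h3 := congrFun h (a, x, y)
    exact congrArg (fun t : X × X × X => t.2.2) h3
  · intro F
    have Fp : ∀ x y a : X, fm S y (fm S x a) = fm S (fm S y x) (fm S (gm S x y) a) :=
      fun x y a => congrFun (F x y) a
    funext q
    obtain ⟨x, y, z⟩ := q
    show ((gm S (gm S x y) (gm S (fm S y x) z),
           fm S (gm S (fm S y x) z) (gm S x y),
           fm S z (fm S y x)) : X × X × X)
        = (gm S x (gm S y z),
           gm S (fm S (gm S y z) x) (fm S z y),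
           fm S (fm S z y) (fm S (gm S y z) x))
    -- abbreviations
    set u := gm S x y with hu
    set v := fm S y x with hv
    set p := gm S v z with hp
    set qq := fm S z v with hqq
    set r := gm S y z with hr
    set s := fm S z y with hs
    set n := fm S r x with hn
    -- third component: exactly the f-condition
    have third : qq = fm S s n := by
      rw [hqq, hv, hs, hn, hr]; exact Fp y z x
    -- q = f_s n
    have hq : fm S s n = qq := third.symm
    -- f_v u = y
    have hvu : fm S v u = y := hf1 x y
    -- e1 : f_q (f_p u) = s
    have e1 : fm S qq (fm S p u) = s := by
      have h1 := Fp v z u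
      rw [hvu] at h1
      rw [hqq, hp, ← h1]
    -- h2b : f_q (g_n s) = s
    have h2b : fm S qq (gm S n s) = s := by
      have := hf1 n s
      rwa [hq] at this
    -- second component
    have second : fm S p u = gm S n s := (hf qq).1 (e1.trans h2b.symm)
    -- g_m q = n where m = f_p u
    have hmq : gm S (fm S p u) qq = n := by
      rw [second, ← hq]; exact hg1 n s
    -- f_m w = p where w = g_u p
    have hfmw : fm S (fm S p u) (gm S u p) = p := hf1 u p
    -- f_q p = z
    have hqp : fm S qq p = z := hf1 v z
    -- f_s r = z
    have hsr : fm S s r = z := hf1 y z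
    -- Step D : f_s (f_n (g_u p)) = z
    have stepD : fm S s (fm S n (gm S u p)) = z := by
      have h1 := Fp (fm S p u) qq (gm S u p)
      rw [hfmw, hqp, e1, hmq] at h1
      exact h1.symm
    have hnw : fm S n (gm S u p) = r := (hf s).1 (stepD.trans hsr.symm)
    have hnw' : fm S n (gm S x r) = r := hf1 x r
    have first : gm S u p = gm S x r := (hf n).1 (hnw.trans hnw'.symm)
    rw [first, second, third]
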